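/- arXiv:math/0111008 — 4 statements merged into one kernel-verified Lean document; each statement's English description precedes it below -/
import Mathlib

section
/- Let H be a Hopf algebra, X a left H-module algebra, and A = X ⋊ H the smash product. If a ∈ A commutes with every element of X (viewed inside A), then for every h ∈ H the element a ◁ ad_R h := S(h₁) a h₂ also commutes with every element of X. In other words, the centralizer of X in A is invariant under the right Hopf adjoint action of H. -/
/-!
Work in the convolution algebra of linear maps `H → A`, where `b • f` and `op b • f` multiply
the values of `f` by `b` on the left and on the right. There `ιH` has convolution inverse
`ιH ∘ S`, and the cross relation says `op x • ιH = φₓ * ιH` with `φₓ h = h ▷ x`. Multiplying by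
the inverse gives `S(h₁)(h₂ ▷ x) = x S(h)`, and then
`S(h₁) a h₂ x = S(h₁) a (h₂ ▷ x) h₃ = S(h₁) (h₂ ▷ x) a h₃ = x S(h₁) a h₂`.
-/

open Coalgebra TensorProduct WithConv MulOpposite

namespace LinearMap

variable {R C A : Type*} [CommSemiring R] [AddCommMonoid C] [Module R C] [Semiring A] [Algebra R A]

lemma lift_mul_compl₁₂_comul [CoalgebraStruct R C] (f g : C →ₗ[R] A) (c : C) :
    lift ((mul R A).compl₁₂ f g) (Coalgebra.comul c) = (toConv f * toConv g) c := by
  rw [show lift ((mul R A).compl₁₂ f g) = mul' R A ∘ₗ map f g from ext' fun _ _ => rfl]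
  rfl

instance : SMulCommClass Aᵐᵒᵖ A (WithConv (C →ₗ[R] A)) where
  smul_comm b b' f := by
    ext c
    simp [mul_assoc]

variable [Coalgebra R C]

lemma op_smul_convMul (b : A) (f g : WithConv (C →ₗ[R] A)) : (op b • f) * g = f * (b • g) := by
  ext c
  simp [(ℛ R c).convMul_apply, mul_assoc]

lemma op_smul_convOne (b : A) : op b • (1 : WithConv (C →ₗ[R] A)) = b • 1 := by
  ext c
  simp [Algebra.commutes]

variable {u v φ : WithConv (C →ₗ[R] A)} {y : A}

lemma convMul_eq_smul_of_op_smul_eq_convMul (huv : u * v = 1) (hvu : v * u = 1)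
    (hcross : op y • v = φ * v) : u * φ = y • u :=
  calc u * φ = u * φ * (v * u) := by rw [hvu, mul_one]
    _ = u * (op y • v) * u := by rw [hcross, mul_assoc, mul_assoc, mul_assoc]
    _ = op y • (u * v) * u := by rw [mul_smul_comm]
    _ = y • u := by rw [huv, op_smul_convOne, smul_mul_assoc, one_mul]

lemma op_smul_eq_smul_of_op_smul_eq_convMul (huv : u * v = 1) (hvu : v * u = 1)
    (hcross : op y • v = φ * v) {a : A} (ha : a • φ = op a • φ) :
    op y • (op a • u * v) = y • (op a • u * v) :=
  calc op y • (op a • u * v) = op a • u * (φ * v) := by rw [← mul_smul_comm, hcross]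
    _ = op a • (u * φ) * v := by rw [← mul_assoc, op_smul_convMul, ha, mul_smul_comm]
    _ = op a • (y • u) * v := by rw [convMul_eq_smul_of_op_smul_eq_convMul huv hvu hcross]
    _ = y • (op a • u * v) := by rw [smul_comm, smul_mul_assoc]

end LinearMap

namespace AlgHom

variable {R H A : Type*} [CommSemiring R] [Semiring H] [HopfAlgebra R H] [Semiring A] [Algebra R A]

lemma toConv_comp_antipode_convMul (ι : H →ₐ[R] A) :
    toConv (ι.toLinearMap ∘ₗ HopfAlgebra.antipode R) * toConv ι.toLinearMap = 1 := by
  ext g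
  have := congr($(LinearMap.algHom_comp_convMul_distrib ι (toConv (HopfAlgebra.antipode R))
    (toConv LinearMap.id)) g)
  simpa using this.symm

lemma convMul_toConv_comp_antipode (ι : H →ₐ[R] A) :
    toConv ι.toLinearMap * toConv (ι.toLinearMap ∘ₗ HopfAlgebra.antipode R) = 1 := by
  ext g
  have := congr($(LinearMap.algHom_comp_convMul_distrib ι (toConv LinearMap.id)
    (toConv (HopfAlgebra.antipode R))) g)
  simpa using this.symm

end AlgHom

theorem statement0_general
    {H X A : Type*} [Ring H] [HopfAlgebra ℂ H]
    [Ring X] [Algebra ℂ X] [Ring A] [Algebra ℂ A]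
    (act : H →ₗ[ℂ] X →ₗ[ℂ] X)
    (ιX : X →ₐ[ℂ] A) (ιH : H →ₐ[ℂ] A)
    -- smash-product cross relation `h x = (h₍₁₎ ▷ x) h₍₂₎` in `A`:
    (hcross : ∀ (h : H) (x : X),
      ιH h * ιX x =
        TensorProduct.lift ((LinearMap.mul ℂ A).compl₁₂
          (ιX.toLinearMap ∘ₗ act.flip x) ιH.toLinearMap) (Coalgebra.comul (R := ℂ) h))
    -- `a` commutes with all of `X`:
    (a : A) (ha : ∀ x : X, a * ιX x = ιX x * a) (h : H) (x : X) :
    -- then `a ◁ ad_R h = S(h₍₁₎) a h₍₂₎` commutes with all of `X`: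
    TensorProduct.lift ((LinearMap.mul ℂ A).compl₁₂
        ((LinearMap.mulRight ℂ a) ∘ₗ ιH.toLinearMap ∘ₗ (HopfAlgebra.antipode (R := ℂ)))
        ιH.toLinearMap) (Coalgebra.comul (R := ℂ) h) * ιX x
      = ιX x *
      TensorProduct.lift ((LinearMap.mul ℂ A).compl₁₂
        ((LinearMap.mulRight ℂ a) ∘ₗ ιH.toLinearMap ∘ₗ (HopfAlgebra.antipode (R := ℂ)))
        ιH.toLinearMap) (Coalgebra.comul (R := ℂ) h) := by
  have hcross' : op (ιX x) • toConv ιH.toLinearMap =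
      toConv (ιX.toLinearMap ∘ₗ act.flip x) * toConv ιH.toLinearMap := by
    ext g
    rw [← LinearMap.lift_mul_compl₁₂_comul, ← hcross]
    simp
  have ha' : a • toConv (ιX.toLinearMap ∘ₗ act.flip x) =
      op a • toConv (ιX.toLinearMap ∘ₗ act.flip x) := by
    ext g
    simp [ha]
  have key := congr($(LinearMap.op_smul_eq_smul_of_op_smul_eq_convMul
    ιH.toConv_comp_antipode_convMul ιH.convMul_toConv_comp_antipode hcross' ha') h)
  simp only [ofConv_smul, LinearMap.smul_apply, smul_eq_mul, MulOpposite.smul_eq_mul_unop,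
    MulOpposite.unop_op] at key
  rw [LinearMap.lift_mul_compl₁₂_comul]
  exact key

/-- Let `H` be a Hopf algebra over `ℂ`, `X` a left `H`-module algebra
(with action `act`), and `A = X ⋊ H` the smash product, presented here by embeddings
`ιX : X →ₐ A`, `ιH : H →ₐ A` satisfying the smash-product cross relation
`h·x = (h₁ ▷ x)·h₂`.  If `a ∈ A` commutes with every element of `X`, then for every
`h ∈ H` the element `a ◁ ad_R h = S(h₁) a h₂` also commutes with every element of `X`. -/
theorem statement0
    {H X A : Type*} [Ring H] [HopfAlgebra ℂ H]
    [Ring X] [Algebra ℂ X] [Ring A] [Algebra ℂ A]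
    (act : H →ₗ[ℂ] X →ₗ[ℂ] X)
    (ιX : X →ₐ[ℂ] A) (ιH : H →ₐ[ℂ] A)
    -- `act` makes `X` an `H`-module:
    (hact_unit : ∀ x : X, act 1 x = x)
    (hact_mul : ∀ (g h : H) (x : X), act (g * h) x = act g (act h x))
    -- `X` is an `H`-module *algebra*:  `h ▷ 1 = ε(h)1` and `h ▷ (xy) = (h₁ ▷ x)(h₂ ▷ y)`
    (hact_one : ∀ h : H, act h (1 : X) = Coalgebra.counit (R := ℂ) h • (1 : X))
    (hact_prod : ∀ (h : H) (x y : X),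
      act h (x * y) =
        TensorProduct.lift ((LinearMap.mul ℂ X).compl₁₂ (act.flip x) (act.flip y))
          (Coalgebra.comul (R := ℂ) h))
    -- smash-product cross relation `h x = (h₍₁₎ ▷ x) h₍₂₎` in `A`:
    (hcross : ∀ (h : H) (x : X),
      ιH h * ιX x =
        TensorProduct.lift ((LinearMap.mul ℂ A).compl₁₂
          (ιX.toLinearMap ∘ₗ act.flip x) ιH.toLinearMap) (Coalgebra.comul (R := ℂ) h))
    -- `a` commutes with all of `X`:
    (a : A) (ha : ∀ x : X, a * ιX x = ιX x * a) (h : H) (x : X) :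
    -- then `a ◁ ad_R h = S(h₍₁₎) a h₍₂₎` commutes with all of `X`:
    TensorProduct.lift ((LinearMap.mul ℂ A).compl₁₂
        ((LinearMap.mulRight ℂ a) ∘ₗ ιH.toLinearMap ∘ₗ (HopfAlgebra.antipode (R := ℂ)))
        ιH.toLinearMap) (Coalgebra.comul (R := ℂ) h) * ιX x
      = ιX x *
      TensorProduct.lift ((LinearMap.mul ℂ A).compl₁₂
        ((LinearMap.mulRight ℂ a) ∘ₗ ιH.toLinearMap ∘ₗ (HopfAlgebra.antipode (R := ℂ)))
        ιH.toLinearMap) (Coalgebra.comul (R := ℂ) h) :=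
  statement0_general act ιX ιH hcross a ha h x
end

section
/- If χ: ℝ_q^{1,3} → ℂ is a unital algebra homomorphism, then the eigenvalues p_μ = χ(P_μ) satisfy p_A (p₀ − p₃) = 0 for all A ∈ {−, 3, +}; hence either p₋ = p₊ = p₃ = 0, or p₀ = p₃. -/
/-!
In `ℂ` the generators commute, so for `C = ±` the left side `q⁻¹ p_C p₃ − q p₃ p_C` collapses
to `−λ p_C p₃`, and for `C = 3` the commutator `p₋p₊ − p₊p₋` vanishes. Each relation thus reads
`λ p_C (p₀ − p₃) = 0`, and `λ = q − q⁻¹ ≠ 0` because `q > 1`.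
-/

lemma Complex.ofReal_sub_inv_ne_zero_of_one_lt {q : ℝ} (hq : 1 < q) :
    (q : ℂ) - (q⁻¹ : ℂ) ≠ 0 := by
  have h : q⁻¹ < q := (inv_lt_one_of_one_lt₀ hq).trans hq
  exact_mod_cast (sub_pos.2 h).ne'

lemma and_and_or_of_mul_eq_zero {M : Type*} [MulZeroClass M] [NoZeroDivisors M]
    {a b c d : M} (ha : a * d = 0) (hb : b * d = 0) (hc : c * d = 0) :
    (a = 0 ∧ b = 0 ∧ c = 0) ∨ d = 0 := by
  refine or_iff_not_imp_right.2 fun hd => ⟨?_, ?_, ?_⟩ <;>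
    simp_all only [mul_eq_zero, or_false]

/-- If `χ : ℝ_q^{1,3} → ℂ` is a unital algebra homomorphism, then the
eigenvalues `p_μ = χ(P_μ)` (which, `ℂ` being commutative, are complex numbers satisfying
the images of the defining relations, written out below) satisfy `p_A(p₀ − p₃) = 0` for
all `A ∈ {−,3,+}`; hence either `p₋ = p₊ = p₃ = 0`, or `p₀ = p₃`. -/
theorem statement9 (q : ℝ) (hq : 1 < q) (p0 pm pp p3 : ℂ)
    -- χ applied to  P_AP_B ε^{AB}_C = −λP₀P_C  for C = −, 3, + :
    (hCm : (q⁻¹ : ℂ) * (pm * p3) - (q : ℂ) * (p3 * pm) = -(((q : ℂ) - (q⁻¹ : ℂ)) * (p0 * pm)))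
    (hC3 : pm * pp - pp * pm - ((q : ℂ) - (q⁻¹ : ℂ)) * (p3 * p3)
        = -(((q : ℂ) - (q⁻¹ : ℂ)) * (p0 * p3)))
    (hCp : (q⁻¹ : ℂ) * (p3 * pp) - (q : ℂ) * (pp * p3) = -(((q : ℂ) - (q⁻¹ : ℂ)) * (p0 * pp))) :
    (pm * (p0 - p3) = 0 ∧ p3 * (p0 - p3) = 0 ∧ pp * (p0 - p3) = 0) ∧
    ((pm = 0 ∧ p3 = 0 ∧ pp = 0) ∨ p0 = p3) := by
  have hlam := Complex.ofReal_sub_inv_ne_zero_of_one_lt hq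
  have hm : pm * (p0 - p3) = 0 := mul_left_cancel₀ hlam (by linear_combination hCm)
  have h3 : p3 * (p0 - p3) = 0 := mul_left_cancel₀ hlam (by linear_combination hC3)
  have hp : pp * (p0 - p3) = 0 := mul_left_cancel₀ hlam (by linear_combination hCp)
  refine ⟨⟨hm, h3, hp⟩, ?_⟩
  simpa only [sub_eq_zero] using and_and_or_of_mul_eq_zero hm h3 hp
end

section
/- The mass element m² := P₀² + q⁻¹P₋P₊ + qP₊P₋ − P₃² is central in the q-Minkowski algebra ℝ_q^{1,3}: it commutes with P₀, P₋, P₊, and P₃. -/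
/-!
Write `Y = P₃ - P₀`. Since `P₀` is central, the three `ε`-relations become
`P₋ Y = q² Y P₋`, `Y P₊ = q² P₊ Y` and `P₋P₊ - P₊P₋ = λ P₃ Y`, and
`m² = q⁻¹P₋P₊ + qP₊P₋ - (Y + 2P₀) Y`. The factors `q²` and `q⁻²` picked up by moving `Y` past
`P₋` and `P₊` cancel, so `Y` commutes with `P₋P₊` and `P₊P₋`. Moving `P₋` through `m²`, the
commutator terms `λ(q⁻¹P₋P₃Y + qP₃YP₋)` cancel those of `(Y + 2P₀) Y` because
`λ(q³ + q) = q⁴ - 1` and `2λq = 2(q² - 1)`. The anti-automorphism exchanging `P₋` and `P₊`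
preserves the relations and `m²`, which gives the case of `P₊` by passing to `Aᵐᵒᵖ`.
-/

namespace QMinkowski

open MulOpposite

variable {K A : Type*} [Field K] [Ring A] [Algebra K A]

/-- The relations of `ℝ_q^{1,3}` in the generators `P₀, P₋, P₊` and `Y = P₃ - P₀`. -/
structure Rels (q : K) (P0 Pm Pp Y : A) : Prop where
  commute_P0_Pm : Commute P0 Pm
  commute_P0_Pp : Commute P0 Pp
  commute_P0_Y : Commute P0 Y
  Pm_mul_Y : Pm * Y = q ^ 2 • (Y * Pm)
  Y_mul_Pp : Y * Pp = q ^ 2 • (Pp * Y)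
  commutator_Pm_Pp : Pm * Pp - Pp * Pm = (q - q⁻¹) • ((Y + P0) * Y)

def mass (q : K) (P0 Pm Pp Y : A) : A :=
  q⁻¹ • (Pm * Pp) + q • (Pp * Pm) - (Y + 2 • P0) * Y

variable {q : K} {P0 Pm Pp P3 Y : A}

theorem Rels.of_presentation (hq : q ≠ 0)
    (h0m : P0 * Pm = Pm * P0) (h03 : P0 * P3 = P3 * P0) (h0p : P0 * Pp = Pp * P0)
    (hCm : q⁻¹ • (Pm * P3) - q • (P3 * Pm) = -((q - q⁻¹) • (P0 * Pm)))
    (hC3 : Pm * Pp - Pp * Pm - (q - q⁻¹) • (P3 * P3) = -((q - q⁻¹) • (P0 * P3)))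
    (hCp : q⁻¹ • (P3 * Pp) - q • (Pp * P3) = -((q - q⁻¹) • (P0 * Pp))) :
    Rels q P0 Pm Pp (P3 - P0) where
  commute_P0_Pm := h0m
  commute_P0_Pp := h0p
  commute_P0_Y := Commute.sub_right h03 (Commute.refl P0)
  Pm_mul_Y := by
    linear_combination (norm := skip) q • hCm + h0m
    simp only [mul_sub, sub_mul, smul_sub, smul_neg, smul_smul]
    match_scalars <;> field_simp <;> ring
  Y_mul_Pp := by
    linear_combination (norm := skip) q • hCp - q ^ 2 • h0p
    simp only [mul_sub, sub_mul, smul_sub, smul_neg, smul_smul]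
    match_scalars <;> field_simp <;> ring
  commutator_Pm_Pp := by
    linear_combination (norm := skip) hC3 - (q - q⁻¹) • h03
    simp only [sub_add_cancel, mul_sub, smul_sub]
    module

theorem mass_eq (h03 : P0 * P3 = P3 * P0) :
    P0 * P0 + q⁻¹ • (Pm * Pp) + q • (Pp * Pm) - P3 * P3 = mass q P0 Pm Pp (P3 - P0) := by
  linear_combination (norm := skip) h03
  simp only [mass, add_mul, sub_mul, mul_sub, smul_mul_assoc]
  module

theorem Rels.op (h : Rels q P0 Pm Pp Y) : Rels q (op P0) (op Pp) (op Pm) (op Y) where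
  commute_P0_Pm := h.commute_P0_Pp.op
  commute_P0_Pp := h.commute_P0_Pm.op
  commute_P0_Y := h.commute_P0_Y.op
  Pm_mul_Y := by rw [← op_mul, h.Y_mul_Pp, op_smul, op_mul]
  Y_mul_Pp := by rw [← op_mul, h.Pm_mul_Y, op_smul, op_mul]
  commutator_Pm_Pp := by
    rw [← op_mul, ← op_mul, ← op_sub, h.commutator_Pm_Pp, op_smul, op_mul, op_add,
      ((Commute.refl _).add_left h.commute_P0_Y.op).eq]

theorem mass_op (h : Commute P0 Y) :
    mass q (op P0) (op Pp) (op Pm) (op Y) = op (mass q P0 Pm Pp Y) := by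
  simp only [mass, op_sub, op_add, op_smul, op_mul]
  rw [((Commute.refl _).add_left (h.op.smul_left 2)).eq]

theorem Rels.commute_P0_mass (h : Rels q P0 Pm Pp Y) : Commute P0 (mass q P0 Pm Pp Y) := by
  have hY := h.commute_P0_Y
  exact (((h.commute_P0_Pm.mul_right h.commute_P0_Pp).smul_right _).add_right
    ((h.commute_P0_Pp.mul_right h.commute_P0_Pm).smul_right _)).sub_right
    ((hY.add_right ((Commute.refl P0).smul_right 2)).mul_right hY)

theorem Rels.commute_Y_mass (hq : q ≠ 0) (h : Rels q P0 Pm Pp Y) :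
    Commute Y (mass q P0 Pm Pp Y) := by
  have hmp : Commute Y (Pm * Pp) := by
    refine smul_right_injective A (pow_ne_zero 2 hq) ?_
    calc q ^ 2 • (Y * (Pm * Pp)) = Pm * Y * Pp := by rw [h.Pm_mul_Y, smul_mul_assoc, mul_assoc]
      _ = Pm * (Y * Pp) := mul_assoc ..
      _ = q ^ 2 • (Pm * Pp * Y) := by rw [h.Y_mul_Pp, mul_smul_comm, mul_assoc]
  have hpm : Commute Y (Pp * Pm) := by
    rw [Commute, SemiconjBy, ← mul_assoc, h.Y_mul_Pp, mul_assoc, h.Pm_mul_Y, smul_mul_assoc,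
      mul_smul_comm, mul_assoc]
  exact ((hmp.smul_right _).add_right (hpm.smul_right _)).sub_right
    (((Commute.refl Y).add_right (h.commute_P0_Y.symm.smul_right 2)).mul_right (Commute.refl Y))

theorem Rels.commute_Pm_mass (hq : q ≠ 0) (h : Rels q P0 Pm Pp Y) :
    Commute Pm (mass q P0 Pm Pp Y) := by
  have hYY : Pm * (Y * Y) = q ^ 4 • (Y * Y * Pm) := by
    rw [← mul_assoc, h.Pm_mul_Y, smul_mul_assoc, mul_assoc, h.Pm_mul_Y, mul_smul_comm, smul_smul,
      mul_assoc]
    ring_nf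
  have h0Y : Pm * (P0 * Y) = q ^ 2 • (P0 * Y * Pm) := by
    rw [← mul_assoc, ← h.commute_P0_Pm.eq, mul_assoc, h.Pm_mul_Y, mul_smul_comm, mul_assoc]
  show _ = _
  linear_combination (norm := skip)
    q⁻¹ • (Pm * h.commutator_Pm_Pp) + q • (h.commutator_Pm_Pp * Pm) +
      (q⁻¹ * (q - q⁻¹) - 1) • hYY + (q⁻¹ * (q - q⁻¹) - 2) • h0Y
  simp only [mass, mul_add, add_mul, mul_sub, sub_mul, mul_assoc, smul_add, smul_sub,
    mul_smul_comm, smul_mul_assoc, smul_smul]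
  match_scalars <;> field_simp <;> ring

theorem Rels.commute_Pp_mass (hq : q ≠ 0) (h : Rels q P0 Pm Pp Y) :
    Commute Pp (mass q P0 Pm Pp Y) := by
  simpa [mass_op h.commute_P0_Y] using (h.op.commute_Pm_mass hq).unop

end QMinkowski

open QMinkowski in
/-- The mass element `m² = P₀² + q⁻¹P₋P₊ + qP₊P₋ − P₃²` is central in
the q-Minkowski algebra `ℝ_q^{1,3}`: it commutes with `P₀`, `P₋`, `P₊`, `P₃`.
The algebra is presented by `P₀P_A = P_AP₀` and `P_AP_B ε^{AB}_C = −λP₀P_C`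
(written out below for `C ∈ {−,3,+}` using the nonzero ε-components). -/
theorem statement10 {A : Type*} [Ring A] [Algebra ℝ A] (q : ℝ) (hq : 1 < q)
    (P0 Pm Pp P3 : A)
    (h0m : P0 * Pm = Pm * P0) (h03 : P0 * P3 = P3 * P0) (h0p : P0 * Pp = Pp * P0)
    -- C = − :  ε^{−3}_− P₋P₃ + ε^{3−}_− P₃P₋ = −λ P₀P₋
    (hCm : q⁻¹ • (Pm * P3) - q • (P3 * Pm) = -((q - q⁻¹) • (P0 * Pm)))
    -- C = 3 :  ε^{−+}_3 P₋P₊ + ε^{+−}_3 P₊P₋ + ε^{33}_3 P₃P₃ = −λ P₀P₃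
    (hC3 : Pm * Pp - Pp * Pm - (q - q⁻¹) • (P3 * P3) = -((q - q⁻¹) • (P0 * P3)))
    -- C = + :  ε^{3+}_+ P₃P₊ + ε^{+3}_+ P₊P₃ = −λ P₀P₊
    (hCp : q⁻¹ • (P3 * Pp) - q • (Pp * P3) = -((q - q⁻¹) • (P0 * Pp))) :
    (fun (M : A) =>
        M * P0 = P0 * M ∧ M * Pm = Pm * M ∧ M * Pp = Pp * M ∧ M * P3 = P3 * M)
      (P0 * P0 + q⁻¹ • (Pm * Pp) + q • (Pp * Pm) - P3 * P3) := by
  have hq0 : q ≠ 0 := by positivity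
  have h := Rels.of_presentation hq0 h0m h03 h0p hCm hC3 hCp
  have hP3 : Commute P3 (mass q P0 Pm Pp (P3 - P0)) := by
    simpa using (h.commute_Y_mass hq0).add_left h.commute_P0_mass
  rw [mass_eq h03]
  exact ⟨h.commute_P0_mass.eq.symm, (h.commute_Pm_mass hq0).eq.symm,
    (h.commute_Pp_mass hq0).eq.symm, hP3.eq.symm⟩
end

section
/- In SU_q(2), the matrix M with rows/columns indexed by {0,−,+,3}: M⁰₀ = 1, M⁻₋ = a², M⁻₊ = b², M⁻₃ = q^{1/2}[2]^{1/2}ab, M⁺₋ = c², M⁺₊ = d², M⁺₃ = q^{1/2}[2]^{1/2}cd, M³₋ = q^{1/2}[2]^{1/2}ac, M³₊ = q^{1/2}[2]^{1/2}bd, M³₃ = 1 + [2]bc (all other entries with index 0 being 0) satisfies the comultiplicativity property Δ(M^μ_σ) = Σ_ν M^μ_ν ⊗ M^ν_σ, where Δ is the coproduct of SU_q(2) given by Δ(a) = a⊗a + b⊗c, Δ(b) = a⊗b + b⊗d, Δ(c) = c⊗a + d⊗c, Δ(d) = c⊗b + d⊗d. -/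
/-!
The fundamental matrix `u = (a b; c d)` is a matrix corepresentation, hence so is its Kronecker
square `u ⊗ u`. The matrix `M` is `u ⊗ u` written in a basis adapted to the decomposition of the
tensor square into the trivial corepresentation, spanned by the `q`-singlet `e₀₁ - q⁻¹ e₁₀`, and the
spin-one corepresentation, spanned by `e₀₀`, `e₁₁` and `(e₀₁ + q e₁₀) / s` with `s² = q [2] = q² + 1`.
A scalar change of basis preserves comultiplicativity, so `M` is comultiplicative.
-/

open TensorProduct
open scoped Kronecker

def IsMatrixCorep {R A : Type*} [CommSemiring R] [Semiring A] [Algebra R A]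
    (Δ : A →ₐ[R] A ⊗[R] A) {n : Type*} [Fintype n] (U : Matrix n n A) : Prop :=
  ∀ i j, Δ (U i j) = ∑ k, U i k ⊗ₜ[R] U k j

namespace IsMatrixCorep

variable {R A : Type*} [CommSemiring R] [Semiring A] [Algebra R A] {Δ : A →ₐ[R] A ⊗[R] A}
  {m n : Type*} [Fintype m] [Fintype n]

theorem kronecker {U : Matrix m m A} {V : Matrix n n A} (hU : IsMatrixCorep Δ U)
    (hV : IsMatrixCorep Δ V) : IsMatrixCorep Δ (U ⊗ₖ V) := by
  rintro ⟨i, k⟩ ⟨j, l⟩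
  simp only [Matrix.kronecker_apply, map_mul, hU i j, hV k l, Finset.sum_mul_sum,
    Algebra.TensorProduct.tmul_mul_tmul, Fintype.sum_prod_type]

theorem of_mul_eq_mul [DecidableEq m] {U : Matrix n n A} {M : Matrix m m A}
    (hU : IsMatrixCorep Δ U) (J : Matrix n m R) (P : Matrix m n R) (hPJ : P * J = 1)
    (hJ : U * J.map (algebraMap R A) = J.map (algebraMap R A) * M) :
    IsMatrixCorep Δ M := by
  set J' := J.map (algebraMap R A)
  set P' := P.map (algebraMap R A)
  have hM : P' * U * J' = M := by
    rw [Matrix.mul_assoc, hJ, ← Matrix.mul_assoc, ← Matrix.map_mul, hPJ,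
      Matrix.map_one _ (map_zero _) (map_one _), Matrix.one_mul]
  intro μ σ
  calc Δ (M μ σ) = ∑ z, (P' * U) μ z ⊗ₜ[R] (U * J') z σ := by
        rw [← hM]
        simp only [Matrix.mul_apply, P', J', Matrix.map_apply, ← Algebra.smul_def,
          ← Algebra.commutes, Finset.smul_sum, sum_tmul, tmul_sum, map_sum, map_smul, hU _ _,
          smul_tmul', tmul_smul]
        conv_lhs => enter [2, y]; rw [Finset.sum_comm]
        exact Finset.sum_comm
    _ = ∑ z, (P' * U) μ z ⊗ₜ[R] (J' * M) z σ := by rw [hJ]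
    _ = ∑ ν, (P' * U * J') μ ν ⊗ₜ[R] M ν σ := by
        simp only [Matrix.mul_apply, P', J', Matrix.map_apply, ← Algebra.smul_def,
          ← Algebra.commutes, sum_tmul, tmul_sum, smul_tmul]
        exact Finset.sum_comm
    _ = ∑ ν, M μ ν ⊗ₜ[R] M ν σ := by rw [hM]

end IsMatrixCorep

section TensorSquare

variable {K A : Type*} [Field K] [Ring A] [Algebra K A]

/-- Row `(i, k)` is the coordinate of `eᵢₖ`; the columns are the singlet and spin-one vectors, in the
order `0, −, +, 3` of the indices of `M`. -/
def tensorSquareBasis (q s : K) : Matrix (Fin 2 × Fin 2) (Fin 4) K := fun p =>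
  ![![![0, 1, 0, 0], ![1, 0, 0, s⁻¹]], ![![-q⁻¹, 0, 0, q / s], ![0, 0, 1, 0]]] p.1 p.2

def tensorSquareBasisInv (q s : K) : Matrix (Fin 4) (Fin 2 × Fin 2) K := fun μ p =>
  ![![![0, q * q / (q * q + 1)], ![-q / (q * q + 1), 0]], ![![1, 0], ![0, 0]],
    ![![0, 0], ![0, 1]], ![![0, s⁻¹], ![q / s, 0]]] μ p.1 p.2

theorem tensorSquareBasisInv_mul_tensorSquareBasis {q s : K} (hq : q ≠ 0) (hs : s ≠ 0)
    (hqs : s * s = q * q + 1) : tensorSquareBasisInv q s * tensorSquareBasis q s = 1 := by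
  have hq2 : q * q + 1 ≠ 0 := hqs ▸ mul_ne_zero hs hs
  ext μ ν
  fin_cases μ <;> fin_cases ν <;>
    simp only [Fin.zero_eta, Fin.mk_one, Fin.reduceFinMk, Fin.isValue, Matrix.mul_apply,
      Fintype.sum_prod_type, Fin.sum_univ_two, tensorSquareBasis, tensorSquareBasisInv,
      Matrix.cons_val', Matrix.cons_val, Matrix.cons_val_zero, Matrix.cons_val_one,
      Matrix.cons_val_fin_one, Matrix.one_apply, Fin.reduceEq, if_true, if_false] <;>
    field_simp <;> grind

theorem kronecker_mul_tensorSquareBasis {q s : K} (hq : q ≠ 0) (hs : s ≠ 0)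
    (hqs : s * s = q * q + 1) (a b c d : A)
    (hba : b * a = q • (a * b)) (hca : c * a = q • (a * c))
    (hdb : d * b = q • (b * d)) (hdc : d * c = q • (c * d))
    (hbc : b * c = c * b)
    (hda : d * a - a * d = (q - q⁻¹) • (b * c))
    (hdet : d * a - q • (b * c) = 1) :
    (!![a, b; c, d] ⊗ₖ !![a, b; c, d]) * (tensorSquareBasis q s).map (algebraMap K A) =
      (tensorSquareBasis q s).map (algebraMap K A) *
      Matrix.of ![![1, 0, 0, 0],
        ![0, a * a, b * b, s • (a * b)],
        ![0, c * c, d * d, s • (c * d)],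
        ![0, s • (a * c), s • (b * d), 1 + (q + q⁻¹) • (b * c)]] := by
  have hda' : d * a = 1 + q • (b * c) := by rw [← hdet]; abel
  have had : a * d = 1 + q⁻¹ • (b * c) := by
    rw [show a * d = d * a - (d * a - a * d) by abel, hda, hda', sub_smul]
    abel
  ext ⟨i, k⟩ σ
  fin_cases i <;> fin_cases k <;> fin_cases σ <;>
    simp only [Fin.zero_eta, Fin.mk_one, Fin.reduceFinMk, Fin.isValue, Matrix.mul_apply,
      Fintype.sum_prod_type, Fin.sum_univ_two, Fin.sum_univ_four, Matrix.kroneckerMap_apply,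
      Matrix.map_apply, Matrix.of_apply, tensorSquareBasis, Matrix.cons_val', Matrix.cons_val,
      Matrix.cons_val_zero, Matrix.cons_val_one, Matrix.cons_val_fin_one, ← Algebra.commutes,
      ← Algebra.smul_def, zero_smul, one_smul, neg_smul, smul_zero, add_zero, zero_add]
  all_goals simp only [hba, hca, hdb, hdc, ← hbc, hda', had, smul_add, smul_smul]
  all_goals match_scalars <;> field_simp <;> grind

end TensorSquare

/-- In `SU_q(2)`, the 4×4 matrix `M` (rows/columns indexed by
`{0,−,+,3}`, here `0,1,2,3`) with `M⁰₀ = 1`, `M⁻₋ = a²`, `M⁻₊ = b²`,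
`M⁻₃ = q^{1/2}[2]^{1/2}ab`, `M⁺₋ = c²`, `M⁺₊ = d²`, `M⁺₃ = q^{1/2}[2]^{1/2}cd`,
`M³₋ = q^{1/2}[2]^{1/2}ac`, `M³₊ = q^{1/2}[2]^{1/2}bd`, `M³₃ = 1 + [2]bc` (all other
entries zero) is comultiplicative:  `Δ(M^μ_σ) = Σ_ν M^μ_ν ⊗ M^ν_σ`, where `Δ` is the
coproduct of `SU_q(2)` with `Δ(a) = a⊗a + b⊗c`, `Δ(b) = a⊗b + b⊗d`,
`Δ(c) = c⊗a + d⊗c`, `Δ(d) = c⊗b + d⊗d`. -/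
theorem statement12 {A : Type*} [Ring A] [Algebra ℝ A] (q : ℝ) (hq : 1 < q)
    (a b c d : A)
    (hba : b * a = q • (a * b)) (hca : c * a = q • (a * c))
    (hdb : d * b = q • (b * d)) (hdc : d * c = q • (c * d))
    (hbc : b * c = c * b)
    (hda : d * a - a * d = (q - q⁻¹) • (b * c))
    (hdet : d * a - q • (b * c) = 1)
    (Δ : A →ₐ[ℝ] A ⊗[ℝ] A)
    (hΔa : Δ a = a ⊗ₜ a + b ⊗ₜ c) (hΔb : Δ b = a ⊗ₜ b + b ⊗ₜ d)
    (hΔc : Δ c = c ⊗ₜ a + d ⊗ₜ c) (hΔd : Δ d = c ⊗ₜ b + d ⊗ₜ d) :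
    (fun (M : Fin 4 → Fin 4 → A) =>
        ∀ μ σ : Fin 4, Δ (M μ σ) = ∑ ν, M μ ν ⊗ₜ[ℝ] M ν σ)
      ![![1, 0, 0, 0],
        ![0, a * a, b * b, Real.sqrt (q * (q + q⁻¹)) • (a * b)],
        ![0, c * c, d * d, Real.sqrt (q * (q + q⁻¹)) • (c * d)],
        ![0, Real.sqrt (q * (q + q⁻¹)) • (a * c),
            Real.sqrt (q * (q + q⁻¹)) • (b * d),
            1 + (q + q⁻¹) • (b * c)]] := by
  have hq0 : 0 < q := zero_lt_one.trans hq
  have hqq : 0 < q * (q + q⁻¹) := mul_pos hq0 (add_pos hq0 (inv_pos.2 hq0))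
  have hs : Real.sqrt (q * (q + q⁻¹)) ≠ 0 := (Real.sqrt_pos.2 hqq).ne'
  have hqs : Real.sqrt (q * (q + q⁻¹)) * Real.sqrt (q * (q + q⁻¹)) = q * q + 1 := by
    rw [Real.mul_self_sqrt hqq.le]
    field_simp
  have hu : IsMatrixCorep Δ !![a, b; c, d] := by
    intro i j
    fin_cases i <;> fin_cases j <;> simp [Fin.sum_univ_two, hΔa, hΔb, hΔc, hΔd]
  exact (hu.kronecker hu).of_mul_eq_mul _ _
    (tensorSquareBasisInv_mul_tensorSquareBasis hq0.ne' hs hqs)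
    (kronecker_mul_tensorSquareBasis hq0.ne' hs hqs a b c d hba hca hdb hdc hbc hda hdet)
end
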